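/- Let (A,B,X,ρ,σ,λ,H^0) be a covariant system with X a Hilbert A–B bimodule of finite type. Then the crossed product X⋊_λ H is a Hilbert (A⋊_ρ H)–(B⋊_σ H) bimodule of finite type, and its indices satisfy l-Ind[X⋊_λ H] = l-Ind[X]⋊_σ 1 and r-Ind[X⋊_λ H] = r-Ind[X]⋊_ρ 1. -/

import Mathlib

open scoped TensorProduct
open Filter Topology
set_option maxHeartbeats 1000000
set_option linter.unusedSectionVars false
set_option synthInstance.maxHeartbeats 400000
noncomputable section
namespace SMEPaper
universe u

/-! ### Generalities on tensor products with a finite dimensional C*-algebra -/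

/-- Contraction of the right tensor factor against a linear functional:
`appRight f (m ⊗ c) = f c • m`. -/
def appRight {M C : Type*} [AddCommGroup M] [Module ℂ M] [AddCommGroup C] [Module ℂ C]
    (f : C →ₗ[ℂ] ℂ) : M ⊗[ℂ] C →ₗ[ℂ] M :=
  (TensorProduct.rid ℂ M).toLinearMap ∘ₗ TensorProduct.map LinearMap.id f

/-- The `i`-th coordinate, with respect to the canonical finite basis of `C`, of an
element of `M ⊗[ℂ] C`. -/
def tcoord {M C : Type*} [AddCommGroup M] [Module ℂ M] [AddCommGroup C] [Module ℂ C]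
    [FiniteDimensional ℂ C] (i : Fin (Module.finrank ℂ C)) : M ⊗[ℂ] C →ₗ[ℂ] M :=
  appRight ((Module.finBasis ℂ C).coord i)

/-- The star operation on `M ⊗[ℂ] C` (`C` finite dimensional) where the star operation on the
first factor is supplied as a function: on simple tensors, `m ⊗ c ↦ sM m ⊗ star c`. -/
def tstarWith {M C : Type*} [AddCommGroup M] [Module ℂ M] [Ring C] [Algebra ℂ C]
    [StarRing C] [FiniteDimensional ℂ C] (sM : M → M) (t : M ⊗[ℂ] C) : M ⊗[ℂ] C :=
  ∑ i, sM (tcoord i t) ⊗ₜ star (Module.finBasis ℂ C i)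

/-- Combination of an operation on the first factors and an operation on the second (finite
dimensional) factors to an operation on tensor products: on simple tensors,
`tmix op cop (p ⊗ c) (q ⊗ d) = op p q ⊗ cop c d`. -/
def tmix {P Q R C : Type*} [AddCommGroup P] [Module ℂ P] [AddCommGroup Q] [Module ℂ Q]
    [AddCommGroup R] [Module ℂ R] [Ring C] [Algebra ℂ C] [FiniteDimensional ℂ C]
    (op : P → Q → R) (cop : C → C → C) (s : P ⊗[ℂ] C) (t : Q ⊗[ℂ] C) : R ⊗[ℂ] C :=
  ∑ i, ∑ j,
    op (tcoord i s) (tcoord j t) ⊗ₜ cop (Module.finBasis ℂ C i) (Module.finBasis ℂ C j)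

/-- The operation on tensor products induced by an operation on the first factors (and
multiplication in the second): `tact op (p ⊗ c) (q ⊗ d) = op p q ⊗ (c * d)`. -/
def tact {P Q R C : Type*} [AddCommGroup P] [Module ℂ P] [AddCommGroup Q] [Module ℂ Q]
    [AddCommGroup R] [Module ℂ R] [Ring C] [Algebra ℂ C] [FiniteDimensional ℂ C]
    (op : P → Q → R) : P ⊗[ℂ] C → Q ⊗[ℂ] C → R ⊗[ℂ] C :=
  tmix op (· * ·)

/-- The left inner product on `X ⊗ C` induced by a left (`A`-valued) inner product on `X`:
`(x ⊗ c), (y ⊗ d) ↦ inn x y ⊗ (c * star d)`. -/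
def tinnL {X A C : Type*} [AddCommGroup X] [Module ℂ X] [AddCommGroup A] [Module ℂ A]
    [Ring C] [Algebra ℂ C] [StarRing C] [FiniteDimensional ℂ C]
    (inn : X → X → A) : X ⊗[ℂ] C → X ⊗[ℂ] C → A ⊗[ℂ] C :=
  tmix inn (fun c d => c * star d)

/-- The right inner product on `X ⊗ C` induced by a right (`B`-valued) inner product on `X`:
`(x ⊗ c), (y ⊗ d) ↦ inn x y ⊗ (star c * d)`. -/
def tinnR {X B C : Type*} [AddCommGroup X] [Module ℂ X] [AddCommGroup B] [Module ℂ B]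
    [Ring C] [Algebra ℂ C] [StarRing C] [FiniteDimensional ℂ C]
    (inn : X → X → B) : X ⊗[ℂ] C → X ⊗[ℂ] C → B ⊗[ℂ] C :=
  tmix inn (fun c d => star c * d)

/-! ### Finite dimensional C*-Hopf algebras -/

/-- The data and axioms of a finite dimensional C*-Hopf algebra structure on the finite
dimensional C*-algebra `H0`: a comultiplication, counit and antipode satisfying the Hopf
algebra axioms, compatibly with the ⋆-structure. -/
structure HopfAlgData (H0 : Type u) [Ring H0] [Algebra ℂ H0] [StarRing H0]
    [StarModule ℂ H0] [FiniteDimensional ℂ H0] where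
  comul : H0 →ₐ[ℂ] H0 ⊗[ℂ] H0
  counit : H0 →ₐ[ℂ] ℂ
  antipode : H0 →ₗ[ℂ] H0
  coassoc : ∀ h, TensorProduct.map comul.toLinearMap LinearMap.id (comul h)
      = (TensorProduct.assoc ℂ H0 H0 H0).symm
          (TensorProduct.map LinearMap.id comul.toLinearMap (comul h))
  counit_left : ∀ h,
      (TensorProduct.lid ℂ H0) (TensorProduct.map counit.toLinearMap LinearMap.id (comul h)) = h
  counit_right : ∀ h, appRight counit.toLinearMap (comul h) = h
  antipode_left : ∀ (h : H0) (n : ℕ) (h1 h2 : Fin n → H0),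
      comul h = ∑ i, h1 i ⊗ₜ h2 i → ∑ i, antipode (h1 i) * h2 i = counit h • 1
  antipode_right : ∀ (h : H0) (n : ℕ) (h1 h2 : Fin n → H0),
      comul h = ∑ i, h1 i ⊗ₜ h2 i → ∑ i, h1 i * antipode (h2 i) = counit h • 1
  comul_star : ∀ h, comul (star h) = tstarWith star (comul h)
  counit_star : ∀ h, counit (star h) = starRingEnd ℂ (counit h)

/-! ### Coactions on C*-algebras -/

section Coaction
variable {H0 : Type u} [Ring H0] [Algebra ℂ H0] [StarRing H0] [StarModule ℂ H0]
  [FiniteDimensional ℂ H0]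
variable {A B X : Type u} [Ring A] [Algebra ℂ A] [StarRing A]
  [Ring B] [Algebra ℂ B] [StarRing B] [AddCommGroup X] [Module ℂ X]

/-- `ρ : A → A ⊗ H0` is a weak coaction of `H0` (with counit `ε0`) on `A`:
a unital ⋆-homomorphism with `(id ⊗ ε0) ∘ ρ = id`. -/
structure IsWeakCoaction (ε0 : H0 →ₗ[ℂ] ℂ) (ρ : A →ₗ[ℂ] A ⊗[ℂ] H0) : Prop where
  map_one : ρ 1 = 1
  map_mul : ∀ a b, ρ (a * b) = ρ a * ρ b
  map_star : ∀ a, ρ (star a) = tstarWith star (ρ a)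
  counital : ∀ a, appRight ε0 (ρ a) = a

/-- `ρ : A → A ⊗ H0` is a coaction of `H0` (with comultiplication `Δ0`, counit `ε0`) on `A`:
a weak coaction with `(ρ ⊗ id) ∘ ρ = (id ⊗ Δ0) ∘ ρ`. -/
structure IsCoaction (Δ0 : H0 →ₗ[ℂ] H0 ⊗[ℂ] H0) (ε0 : H0 →ₗ[ℂ] ℂ)
    (ρ : A →ₗ[ℂ] A ⊗[ℂ] H0) extends IsWeakCoaction ε0 ρ : Prop where
  coassoc : ∀ a, TensorProduct.map ρ LinearMap.id (ρ a)
      = (TensorProduct.assoc ℂ A H0 H0).symm (TensorProduct.map LinearMap.id Δ0 (ρ a))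

/-- The pair `(ρ, u)` is a twisted coaction of `H0` on `A`. -/
structure IsTwistedCoaction (Δ0 : H0 →ₗ[ℂ] H0 ⊗[ℂ] H0) (ε0 : H0 →ₗ[ℂ] ℂ)
    (ρ : A →ₗ[ℂ] A ⊗[ℂ] H0) (u : (A ⊗[ℂ] H0) ⊗[ℂ] H0)
    extends IsWeakCoaction ε0 ρ : Prop where
  unitary_left : u * tstarWith (tstarWith star) u = 1
  unitary_right : tstarWith (tstarWith star) u * u = 1
  twisted_coassoc : ∀ a, TensorProduct.map ρ LinearMap.id (ρ a)
      = u * ((TensorProduct.assoc ℂ A H0 H0).symm (TensorProduct.map LinearMap.id Δ0 (ρ a)))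
        * tstarWith (tstarWith star) u
  cocycle : (u ⊗ₜ (1 : H0))
        * TensorProduct.map ((TensorProduct.assoc ℂ A H0 H0).symm.toLinearMap
            ∘ₗ TensorProduct.map LinearMap.id Δ0) LinearMap.id u
      = TensorProduct.map (TensorProduct.map ρ LinearMap.id) LinearMap.id u
        * (TensorProduct.assoc ℂ (A ⊗[ℂ] H0) H0 H0).symm
            (TensorProduct.map LinearMap.id Δ0 u)
  counit_mid : ∀ h : Module.Dual ℂ H0, appRight h (appRight ε0 u) = h 1 • (1 : A)
  counit_out : ∀ h : Module.Dual ℂ H0, appRight ε0 (appRight h u) = h 1 • (1 : A)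

/-- The trivial coaction `a ↦ a ⊗ 1` of `H0` on `A`. -/
def trivialCoaction (H0 : Type u) [Ring H0] [Algebra ℂ H0] (A : Type u) [Ring A]
    [Algebra ℂ A] : A →ₗ[ℂ] A ⊗[ℂ] H0 :=
  (TensorProduct.mk ℂ A H0).flip 1

end Coaction

/-! ### Hilbert bimodules -/

/-- A (pre-)Hilbert `A`–`B` bimodule structure on `X`: a bimodule with a left `A`-valued and a
right `B`-valued inner product, compatible with the module actions, with the appropriate
(conjugate-)linearity, symmetry, positivity and definiteness properties. -/
structure Bimod (A B X : Type u) [Ring A] [Algebra ℂ A] [StarRing A]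
    [Ring B] [Algebra ℂ B] [StarRing B] [AddCommGroup X] [Module ℂ X] where
  ls : A → X → X
  rs : X → B → X
  linn : X → X → A
  rinn : X → X → B
  ls_one : ∀ x, ls 1 x = x
  ls_mul : ∀ a a' x, ls (a * a') x = ls a (ls a' x)
  ls_add : ∀ a a' x, ls (a + a') x = ls a x + ls a' x
  ls_add' : ∀ a x y, ls a (x + y) = ls a x + ls a y
  ls_smul : ∀ (c : ℂ) a x, ls (c • a) x = c • ls a x
  ls_smul' : ∀ (c : ℂ) a x, ls a (c • x) = c • ls a x
  rs_one : ∀ x, rs x 1 = x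
  rs_mul : ∀ x b b', rs x (b * b') = rs (rs x b) b'
  rs_add : ∀ x b b', rs x (b + b') = rs x b + rs x b'
  rs_add' : ∀ x y b, rs (x + y) b = rs x b + rs y b
  rs_smul : ∀ (c : ℂ) x b, rs x (c • b) = c • rs x b
  rs_smul' : ∀ (c : ℂ) x b, rs (c • x) b = c • rs x b
  ls_rs : ∀ a x b, ls a (rs x b) = rs (ls a x) b
  linn_add_left : ∀ x y z, linn (x + y) z = linn x z + linn y z
  linn_add_right : ∀ x y z, linn x (y + z) = linn x y + linn x z
  rinn_add_left : ∀ x y z, rinn (x + y) z = rinn x z + rinn y z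
  rinn_add_right : ∀ x y z, rinn x (y + z) = rinn x y + rinn x z
  linn_smul_left : ∀ (c : ℂ) x y, linn (c • x) y = c • linn x y
  linn_smul_right : ∀ (c : ℂ) x y, linn x (c • y) = starRingEnd ℂ c • linn x y
  rinn_smul_left : ∀ (c : ℂ) x y, rinn (c • x) y = starRingEnd ℂ c • rinn x y
  rinn_smul_right : ∀ (c : ℂ) x y, rinn x (c • y) = c • rinn x y
  linn_star : ∀ x y, star (linn x y) = linn y x
  rinn_star : ∀ x y, star (rinn x y) = rinn y x
  linn_ls : ∀ a x y, linn (ls a x) y = a * linn x y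
  rinn_rs : ∀ x y b, rinn x (rs y b) = rinn x y * b
  linn_rs : ∀ x y b, linn (rs x b) y = linn x (rs y (star b))
  rinn_ls : ∀ a x y, rinn (ls a x) y = rinn x (ls (star a) y)
  linn_pos : ∀ x, ∃ a, linn x x = star a * a
  rinn_pos : ∀ x, ∃ b, rinn x x = star b * b
  rinn_def : ∀ x, rinn x x = 0 → x = 0

section BimodDefs
variable {A B X : Type u} [Ring A] [Algebra ℂ A] [StarRing A]
    [Ring B] [Algebra ℂ B] [StarRing B] [AddCommGroup X] [Module ℂ X]

/-- A Hilbert bimodule is of finite type if it admits a finite right basis and a finite left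
basis in the sense of Kajiwara–Watatani. -/
def Bimod.FiniteType (bm : Bimod A B X) : Prop :=
  (∃ (n : ℕ) (u : Fin n → X), ∀ x, ∑ i, bm.rs (u i) (bm.rinn (u i) x) = x) ∧
  (∃ (m : ℕ) (v : Fin m → X), ∀ x, ∑ j, bm.ls (bm.linn x (v j)) (v j) = x)

/-- An equivalence bimodule: both inner products are full and the associativity condition
`_A⟨x,y⟩ • z = x • ⟨y,z⟩_B` holds. -/
def Bimod.IsEquivalence (bm : Bimod A B X) : Prop :=
  (∀ x y z, bm.ls (bm.linn x y) z = bm.rs x (bm.rinn y z)) ∧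
  Submodule.span ℂ (Set.range fun p : X × X => bm.linn p.1 p.2) = ⊤ ∧
  Submodule.span ℂ (Set.range fun p : X × X => bm.rinn p.1 p.2) = ⊤

end BimodDefs

/-! ### Coactions on Hilbert bimodules, covariant systems, strong Morita equivalence -/

section BimodCoaction
variable {H0 : Type u} [Ring H0] [Algebra ℂ H0] [StarRing H0] [StarModule ℂ H0]
  [FiniteDimensional ℂ H0]
variable {A B X : Type u} [Ring A] [Algebra ℂ A] [StarRing A]
  [Ring B] [Algebra ℂ B] [StarRing B] [AddCommGroup X] [Module ℂ X]

/-- `(A, B, X, ρ, σ, λ, H0)` is a weak covariant system: `lam` is a weak coaction of `H0` on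
the Hilbert `A`–`B` bimodule `X` with respect to `(A, B, ρ, σ)`. -/
structure IsWeakCoactionBimod (ε0 : H0 →ₗ[ℂ] ℂ) (bm : Bimod A B X)
    (ρ : A →ₗ[ℂ] A ⊗[ℂ] H0) (σ : B →ₗ[ℂ] B ⊗[ℂ] H0)
    (lam : X →ₗ[ℂ] X ⊗[ℂ] H0) : Prop where
  ls_compat : ∀ a x, lam (bm.ls a x) = tact bm.ls (ρ a) (lam x)
  rs_compat : ∀ x b, lam (bm.rs x b) = tact bm.rs (lam x) (σ b)
  linn_compat : ∀ x y, ρ (bm.linn x y) = tinnL bm.linn (lam x) (lam y)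
  rinn_compat : ∀ x y, σ (bm.rinn x y) = tinnR bm.rinn (lam x) (lam y)
  counital : ∀ x, appRight ε0 (lam x) = x

/-- `(A, B, X, ρ, σ, λ, H0)` is a covariant system: `lam` is a coaction of `H0` on the
Hilbert `A`–`B` bimodule `X` with respect to `(A, B, ρ, σ)`. -/
structure IsCoactionBimod (Δ0 : H0 →ₗ[ℂ] H0 ⊗[ℂ] H0) (ε0 : H0 →ₗ[ℂ] ℂ) (bm : Bimod A B X)
    (ρ : A →ₗ[ℂ] A ⊗[ℂ] H0) (σ : B →ₗ[ℂ] B ⊗[ℂ] H0) (lam : X →ₗ[ℂ] X ⊗[ℂ] H0)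
    extends IsWeakCoactionBimod ε0 bm ρ σ lam : Prop where
  coassoc : ∀ x, TensorProduct.map lam LinearMap.id (lam x)
      = (TensorProduct.assoc ℂ X H0 H0).symm (TensorProduct.map LinearMap.id Δ0 (lam x))

/-- `(A, B, X, ρ, u, σ, v, λ, H0)` is a twisted covariant system: `lam` is a twisted coaction
of `H0` on the Hilbert `A`–`B` bimodule `X` with respect to `(A, B, ρ, u, σ, v)`. -/
structure IsTwistedCoactionBimod (Δ0 : H0 →ₗ[ℂ] H0 ⊗[ℂ] H0) (ε0 : H0 →ₗ[ℂ] ℂ)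
    (bm : Bimod A B X) (ρ : A →ₗ[ℂ] A ⊗[ℂ] H0) (u : (A ⊗[ℂ] H0) ⊗[ℂ] H0)
    (σ : B →ₗ[ℂ] B ⊗[ℂ] H0) (v : (B ⊗[ℂ] H0) ⊗[ℂ] H0) (lam : X →ₗ[ℂ] X ⊗[ℂ] H0)
    extends IsWeakCoactionBimod ε0 bm ρ σ lam : Prop where
  twisted : ∀ x, TensorProduct.map lam LinearMap.id (lam x)
      = tact (tact bm.rs)
          (tact (tact bm.ls) u
            ((TensorProduct.assoc ℂ X H0 H0).symm (TensorProduct.map LinearMap.id Δ0 (lam x))))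
          (tstarWith (tstarWith star) v)

/-- Two weak coactions `ρ` (on `A`) and `σ` (on `B`) of `H0` are strongly Morita equivalent
if there are an `A`–`B` equivalence bimodule `X` and a weak coaction of `H0` on `X` with
respect to `(A, B, ρ, σ)`. -/
def WeakSME (ε0 : H0 →ₗ[ℂ] ℂ) (ρ : A →ₗ[ℂ] A ⊗[ℂ] H0) (σ : B →ₗ[ℂ] B ⊗[ℂ] H0) : Prop :=
  ∃ (X : Type u) (_ : AddCommGroup X) (_ : Module ℂ X) (bm : Bimod A B X),
    bm.IsEquivalence ∧ ∃ lam : X →ₗ[ℂ] X ⊗[ℂ] H0, IsWeakCoactionBimod ε0 bm ρ σ lam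

/-- Two coactions `ρ` (on `A`) and `σ` (on `B`) of `H0` are strongly Morita equivalent if
there are an `A`–`B` equivalence bimodule `X` and a coaction of `H0` on `X` with respect to
`(A, B, ρ, σ)`. -/
def CoactSME (Δ0 : H0 →ₗ[ℂ] H0 ⊗[ℂ] H0) (ε0 : H0 →ₗ[ℂ] ℂ)
    (ρ : A →ₗ[ℂ] A ⊗[ℂ] H0) (σ : B →ₗ[ℂ] B ⊗[ℂ] H0) : Prop :=
  ∃ (X : Type u) (_ : AddCommGroup X) (_ : Module ℂ X) (bm : Bimod A B X),
    bm.IsEquivalence ∧ ∃ lam : X →ₗ[ℂ] X ⊗[ℂ] H0, IsCoactionBimod Δ0 ε0 bm ρ σ lam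

/-- Two twisted coactions `(ρ, u)` (on `A`) and `(σ, v)` (on `B`) of `H0` are strongly Morita
equivalent if there are an `A`–`B` equivalence bimodule `X` and a twisted coaction of `H0` on
`X` with respect to `(A, B, ρ, u, σ, v)`. -/
def TwistedSME (Δ0 : H0 →ₗ[ℂ] H0 ⊗[ℂ] H0) (ε0 : H0 →ₗ[ℂ] ℂ)
    (ρ : A →ₗ[ℂ] A ⊗[ℂ] H0) (u : (A ⊗[ℂ] H0) ⊗[ℂ] H0)
    (σ : B →ₗ[ℂ] B ⊗[ℂ] H0) (v : (B ⊗[ℂ] H0) ⊗[ℂ] H0) : Prop :=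
  ∃ (X : Type u) (_ : AddCommGroup X) (_ : Module ℂ X) (bm : Bimod A B X),
    bm.IsEquivalence ∧
      ∃ lam : X →ₗ[ℂ] X ⊗[ℂ] H0, IsTwistedCoactionBimod Δ0 ε0 bm ρ u σ v lam

end BimodCoaction
/-! ### A finite dimensional C*-Hopf algebra together with its dual -/

/-- A finite dimensional C*-Hopf algebra `H` together with its dual C*-Hopf algebra `H0`:
Hopf algebra structures on both, a perfect pairing compatible with all the structure, and
the distinguished (Haar) projections `e ∈ H` and `τ ∈ H0`. -/
structure HopfPairData (H H0 : Type u) [Ring H] [Algebra ℂ H] [StarRing H] [StarModule ℂ H]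
    [FiniteDimensional ℂ H] [Ring H0] [Algebra ℂ H0] [StarRing H0] [StarModule ℂ H0]
    [FiniteDimensional ℂ H0] where
  dH : HopfAlgData H
  dH0 : HopfAlgData H0
  pair : H →ₗ[ℂ] H0 →ₗ[ℂ] ℂ
  perfect : Function.Bijective fun h => pair h
  perfect' : Function.Bijective fun φ => pair.flip φ
  pair_mul_left : ∀ (h l : H) (φ : H0) (n : ℕ) (φ1 φ2 : Fin n → H0),
      dH0.comul φ = ∑ i, φ1 i ⊗ₜ φ2 i →
      pair (h * l) φ = ∑ i, pair h (φ1 i) * pair l (φ2 i)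
  pair_mul_right : ∀ (h : H) (φ ψ : H0) (n : ℕ) (h1 h2 : Fin n → H),
      dH.comul h = ∑ i, h1 i ⊗ₜ h2 i →
      pair h (φ * ψ) = ∑ i, pair (h1 i) φ * pair (h2 i) ψ
  pair_one_left : ∀ φ, pair 1 φ = dH0.counit φ
  pair_one_right : ∀ h, pair h 1 = dH.counit h
  pair_antipode : ∀ h φ, pair (dH.antipode h) φ = pair h (dH0.antipode φ)
  pair_star : ∀ h φ, pair (star h) φ = starRingEnd ℂ (pair h (star (dH0.antipode φ)))
  pair_star' : ∀ h φ, pair h (star φ) = starRingEnd ℂ (pair (star (dH.antipode h)) φ)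
  haar : H
  haar_star : star haar = haar
  haar_idem : haar * haar = haar
  haar_absorb : ∀ h, h * haar = dH.counit h • haar
  haar_absorb' : ∀ h, haar * h = dH.counit h • haar
  counit_haar : dH.counit haar = 1
  haar0 : H0
  haar0_star : star haar0 = haar0
  haar0_idem : haar0 * haar0 = haar0
  haar0_absorb : ∀ φ, φ * haar0 = dH0.counit φ • haar0
  haar0_absorb' : ∀ φ, haar0 * φ = dH0.counit φ • haar0
  counit_haar0 : dH0.counit haar0 = 1

section DualAct
variable {H H0 : Type u} [Ring H] [Algebra ℂ H] [StarRing H] [StarModule ℂ H]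
    [FiniteDimensional ℂ H] [Ring H0] [Algebra ℂ H0] [StarRing H0] [StarModule ℂ H0]
    [FiniteDimensional ℂ H0]

/-- The action of `h ∈ H` on `M` induced by a coaction-type map `ρ : M → M ⊗ H0` of the
dual `H0`:  `h ·_ρ m = (id ⊗ h)(ρ m)`. -/
def coactAct {M : Type u} [AddCommGroup M] [Module ℂ M] (dp : HopfPairData H H0)
    (ρ : M →ₗ[ℂ] M ⊗[ℂ] H0) (h : H) (m : M) : M :=
  appRight (dp.pair h) (ρ m)

end DualAct

/-! ### Abstract unital C*-algebra structures on a complex vector space -/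

/-- The structure of a unital C*-algebra on a complex vector space `E`, given by raw data:
a bilinear multiplication, a unit, an involution and a C*-norm. (This is used to present
crossed products, whose underlying vector space is a tensor product.) -/
structure RawCStarAlg (E : Type u) [AddCommGroup E] [Module ℂ E] where
  mul : E →ₗ[ℂ] E →ₗ[ℂ] E
  one : E
  star' : E → E
  cnorm : E → ℝ
  mul_assoc' : ∀ s t r, mul (mul s t) r = mul s (mul t r)
  one_mul' : ∀ s, mul one s = s
  mul_one' : ∀ s, mul s one = s
  star_add' : ∀ s t, star' (s + t) = star' s + star' t
  star_smul' : ∀ (c : ℂ) s, star' (c • s) = starRingEnd ℂ c • star' s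
  star_invol : ∀ s, star' (star' s) = s
  star_mul'' : ∀ s t, star' (mul s t) = mul (star' t) (star' s)
  norm_nonneg' : ∀ s, 0 ≤ cnorm s
  norm_def : ∀ s, cnorm s = 0 → s = 0
  norm_add' : ∀ s t, cnorm (s + t) ≤ cnorm s + cnorm t
  norm_smul' : ∀ (c : ℂ) s, cnorm (c • s) = ‖c‖ * cnorm s
  norm_mul' : ∀ s t, cnorm (mul s t) ≤ cnorm s * cnorm t
  norm_star' : ∀ s, cnorm (star' s) = cnorm s
  norm_cstar : ∀ s, cnorm (mul (star' s) s) = cnorm s * cnorm s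

namespace RawCStarAlg
variable {E : Type u} [AddCommGroup E] [Module ℂ E] (ra : RawCStarAlg E)

/-- The ring structure on `E` determined by a `RawCStarAlg`. -/
def ringStr : Ring E :=
  { (inferInstance : AddCommGroup E) with
    mul := fun s t => ra.mul s t
    one := ra.one
    mul_assoc := ra.mul_assoc'
    one_mul := ra.one_mul'
    mul_one := ra.mul_one'
    left_distrib := fun s t r => map_add (ra.mul s) t r
    right_distrib := fun s t r => by
      show ra.mul (s + t) r = ra.mul s r + ra.mul t r
      rw [map_add, LinearMap.add_apply]
    zero_mul := fun s => by
      show ra.mul 0 s = 0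
      rw [map_zero, LinearMap.zero_apply]
    mul_zero := fun s => by
      show ra.mul s 0 = 0
      rw [map_zero] }

/-- The `ℂ`-algebra structure on `E` determined by a `RawCStarAlg`. -/
def algStr : @Algebra ℂ E _ (ra.ringStr.toSemiring) :=
  let m : Module ℂ E := inferInstance
  letI := ra.ringStr
  @Algebra.ofModule ℂ E _ _ m
    (fun c s t => by
      show ra.mul (c • s) t = c • ra.mul s t
      rw [map_smul] <;> rfl)
    (fun c s t => by
      show ra.mul s (c • t) = c • ra.mul s t
      rw [map_smul])

/-- The star ring structure on `E` determined by a `RawCStarAlg`. -/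
def starStr : @StarRing E (ra.ringStr.toNonUnitalNonAssocSemiring) :=
  letI := ra.ringStr
  { star := ra.star'
    star_involutive := ra.star_invol
    star_mul := ra.star_mul''
    star_add := ra.star_add' }

end RawCStarAlg

/-! ### Crossed products by finite dimensional C*-Hopf algebras -/

section CrossedDefs
variable {H H0 : Type u} [Ring H] [Algebra ℂ H] [StarRing H] [StarModule ℂ H]
    [FiniteDimensional ℂ H] [Ring H0] [Algebra ℂ H0] [StarRing H0] [StarModule ℂ H0]
    [FiniteDimensional ℂ H0]

/-- Iterated comultiplication `Δ² = (Δ ⊗ id) ∘ Δ`. -/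
def comul2 (d : HopfAlgData H) : H →ₗ[ℂ] (H ⊗[ℂ] H) ⊗[ℂ] H :=
  TensorProduct.map d.comul.toLinearMap LinearMap.id ∘ₗ d.comul.toLinearMap

/-- Iterated comultiplication `Δ³`. -/
def comul3 (d : HopfAlgData H) : H →ₗ[ℂ] ((H ⊗[ℂ] H) ⊗[ℂ] H) ⊗[ℂ] H :=
  TensorProduct.map (TensorProduct.map d.comul.toLinearMap LinearMap.id) LinearMap.id
    ∘ₗ comul2 d

/-- Iterated comultiplication `Δ⁴`. -/
def comul4 (d : HopfAlgData H) :
    H →ₗ[ℂ] (((H ⊗[ℂ] H) ⊗[ℂ] H) ⊗[ℂ] H) ⊗[ℂ] H :=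
  TensorProduct.map
    (TensorProduct.map (TensorProduct.map d.comul.toLinearMap LinearMap.id) LinearMap.id)
    LinearMap.id ∘ₗ comul3 d

variable {A : Type u} [Ring A] [Algebra ℂ A] [StarRing A]

/-- `û(h, l) = (id ⊗ h ⊗ l)(u)` for `u ∈ A ⊗ H0 ⊗ H0` and `h, l ∈ H`. -/
def uhat (dp : HopfPairData H H0) (u : (A ⊗[ℂ] H0) ⊗[ℂ] H0) (h l : H) : A :=
  appRight (dp.pair h) (appRight (dp.pair l) u)

/-- A realization of the crossed product `A ⋊_ρ H` of a coaction `ρ` of `H0` on `A`: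
a unital C*-algebra structure on the vector space `A ⊗ H` satisfying
`(a ⋊ h)(b ⋊ l) = a[h₍₁₎ ·_ρ b] ⋊ h₍₂₎ l` and `(a ⋊ h)* = [h₍₁₎* ·_ρ a*] ⋊ h₍₂₎*`. -/
structure CrossedAlg (dp : HopfPairData H H0) (ρ : A →ₗ[ℂ] A ⊗[ℂ] H0)
    extends RawCStarAlg (A ⊗[ℂ] H) where
  one_def : one = (1 : A) ⊗ₜ (1 : H)
  mul_char : ∀ (a b : A) (h l : H) (n : ℕ) (h1 h2 : Fin n → H),
      dp.dH.comul h = ∑ i, h1 i ⊗ₜ h2 i →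
      mul (a ⊗ₜ h) (b ⊗ₜ l) = ∑ i, (a * coactAct dp ρ (h1 i) b) ⊗ₜ (h2 i * l)
  star_char : ∀ (a : A) (h : H) (n : ℕ) (h1 h2 : Fin n → H),
      dp.dH.comul h = ∑ i, h1 i ⊗ₜ h2 i →
      star' (a ⊗ₜ h) = ∑ i, coactAct dp ρ (star (h1 i)) (star a) ⊗ₜ star (h2 i)

/-- A realization of the twisted crossed product `A ⋊_{ρ,u} H` of a twisted coaction
`(ρ, u)` of `H0` on `A`: a unital C*-algebra structure on the vector space `A ⊗ H` with the
canonical involution, satisfying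
`(a ⋊ h)(b ⋊ l) = a[h₍₁₎ ·_{ρ,u} b]û(h₍₂₎,l₍₁₎) ⋊ h₍₃₎l₍₂₎`. -/
structure TwCrossedAlg (dp : HopfPairData H H0) (ρ : A →ₗ[ℂ] A ⊗[ℂ] H0)
    (u : (A ⊗[ℂ] H0) ⊗[ℂ] H0) extends RawCStarAlg (A ⊗[ℂ] H) where
  one_def : one = (1 : A) ⊗ₜ (1 : H)
  mul_char : ∀ (a b : A) (h l : H) (n : ℕ) (h1 h2 h3 : Fin n → H)
      (m : ℕ) (l1 l2 : Fin m → H),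
      comul2 dp.dH h = ∑ i, (h1 i ⊗ₜ h2 i) ⊗ₜ h3 i →
      dp.dH.comul l = ∑ j, l1 j ⊗ₜ l2 j →
      mul (a ⊗ₜ h) (b ⊗ₜ l)
        = ∑ i, ∑ j,
            (a * coactAct dp ρ (h1 i) b * uhat dp u (h2 i) (l1 j)) ⊗ₜ (h3 i * l2 j)

/-- The dual coaction `ρ̂(a ⋊ h) = (a ⋊ h₍₁₎) ⊗ h₍₂₎` of `H` on the crossed product
`A ⋊ H` (whose underlying vector space is `A ⊗ H`). -/
def dualCoact (d : HopfAlgData H) (A : Type u) [AddCommGroup A] [Module ℂ A] :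
    (A ⊗[ℂ] H) →ₗ[ℂ] (A ⊗[ℂ] H) ⊗[ℂ] H :=
  (TensorProduct.assoc ℂ A H H).symm.toLinearMap
    ∘ₗ TensorProduct.map LinearMap.id d.comul.toLinearMap

end CrossedDefs

/-! ### Hilbert bimodules over raw C*-algebra structures -/

section Over
variable {E F Y : Type u} [AddCommGroup E] [Module ℂ E] [AddCommGroup F] [Module ℂ F]
  [AddCommGroup Y] [Module ℂ Y]

/-- A Hilbert bimodule structure on `Y` over two raw C*-algebra structures (on the complex
vector spaces `E` and `F`); this is the analogue of `Bimod` used when the algebras are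
crossed products presented on tensor product vector spaces. -/
structure BimodOver (raE : RawCStarAlg E) (raF : RawCStarAlg F)
    (Y : Type u) [AddCommGroup Y] [Module ℂ Y] where
  ls : E → Y → Y
  rs : Y → F → Y
  linn : Y → Y → E
  rinn : Y → Y → F
  ls_one : ∀ y, ls raE.one y = y
  ls_mul : ∀ e e' y, ls (raE.mul e e') y = ls e (ls e' y)
  ls_add : ∀ e e' y, ls (e + e') y = ls e y + ls e' y
  ls_add' : ∀ e y y', ls e (y + y') = ls e y + ls e y'
  ls_smul : ∀ (c : ℂ) e y, ls (c • e) y = c • ls e y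
  ls_smul' : ∀ (c : ℂ) e y, ls e (c • y) = c • ls e y
  rs_one : ∀ y, rs y raF.one = y
  rs_mul : ∀ y f f', rs y (raF.mul f f') = rs (rs y f) f'
  rs_add : ∀ y f f', rs y (f + f') = rs y f + rs y f'
  rs_add' : ∀ y y' f, rs (y + y') f = rs y f + rs y' f
  rs_smul : ∀ (c : ℂ) y f, rs y (c • f) = c • rs y f
  rs_smul' : ∀ (c : ℂ) y f, rs (c • y) f = c • rs y f
  ls_rs : ∀ e y f, ls e (rs y f) = rs (ls e y) f
  linn_add_left : ∀ x y z, linn (x + y) z = linn x z + linn y z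
  linn_add_right : ∀ x y z, linn x (y + z) = linn x y + linn x z
  rinn_add_left : ∀ x y z, rinn (x + y) z = rinn x z + rinn y z
  rinn_add_right : ∀ x y z, rinn x (y + z) = rinn x y + rinn x z
  linn_smul_left : ∀ (c : ℂ) x y, linn (c • x) y = c • linn x y
  linn_smul_right : ∀ (c : ℂ) x y, linn x (c • y) = starRingEnd ℂ c • linn x y
  rinn_smul_left : ∀ (c : ℂ) x y, rinn (c • x) y = starRingEnd ℂ c • rinn x y
  rinn_smul_right : ∀ (c : ℂ) x y, rinn x (c • y) = c • rinn x y
  linn_star : ∀ x y, raE.star' (linn x y) = linn y x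
  rinn_star : ∀ x y, raF.star' (rinn x y) = rinn y x
  linn_ls : ∀ e x y, linn (ls e x) y = raE.mul e (linn x y)
  rinn_rs : ∀ x y f, rinn x (rs y f) = raF.mul (rinn x y) f
  linn_rs : ∀ x y f, linn (rs x f) y = linn x (rs y (raF.star' f))
  rinn_ls : ∀ e x y, rinn (ls e x) y = rinn x (ls (raE.star' e) y)
  linn_pos : ∀ x, ∃ e, linn x x = raE.mul (raE.star' e) e
  rinn_pos : ∀ x, ∃ f, rinn x x = raF.mul (raF.star' f) f
  rinn_def : ∀ x, rinn x x = 0 → x = 0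

variable {raE : RawCStarAlg E} {raF : RawCStarAlg F}

/-- Finite type, for bimodules over raw C*-algebra structures. -/
def BimodOver.FiniteType (bmo : BimodOver raE raF Y) : Prop :=
  (∃ (n : ℕ) (u : Fin n → Y), ∀ y, ∑ i, bmo.rs (u i) (bmo.rinn (u i) y) = y) ∧
  (∃ (m : ℕ) (v : Fin m → Y), ∀ y, ∑ j, bmo.ls (bmo.linn y (v j)) (v j) = y)

/-- Equivalence bimodule, for bimodules over raw C*-algebra structures. -/
def BimodOver.IsEquivalence (bmo : BimodOver raE raF Y) : Prop :=
  (∀ x y z, bmo.ls (bmo.linn x y) z = bmo.rs x (bmo.rinn y z)) ∧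
  Submodule.span ℂ (Set.range fun p : Y × Y => bmo.linn p.1 p.2) = ⊤ ∧
  Submodule.span ℂ (Set.range fun p : Y × Y => bmo.rinn p.1 p.2) = ⊤

end Over

section OverCoaction
variable {K : Type u} [Ring K] [Algebra ℂ K] [StarRing K] [StarModule ℂ K]
  [FiniteDimensional ℂ K]
variable {E F Y : Type u} [AddCommGroup E] [Module ℂ E] [AddCommGroup F] [Module ℂ F]
  [AddCommGroup Y] [Module ℂ Y] {raE : RawCStarAlg E} {raF : RawCStarAlg F}

/-- A coaction of the C*-Hopf algebra `K` (with comultiplication `ΔK`, counit `εK`) on the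
Hilbert bimodule `Y` over raw C*-algebra structures, with respect to coactions `θE`, `θF`
of `K` on `E` and `F`. -/
structure IsCoactionBimodOver (ΔK : K →ₗ[ℂ] K ⊗[ℂ] K) (εK : K →ₗ[ℂ] ℂ)
    (bmo : BimodOver raE raF Y) (θE : E →ₗ[ℂ] E ⊗[ℂ] K) (θF : F →ₗ[ℂ] F ⊗[ℂ] K)
    (lam : Y →ₗ[ℂ] Y ⊗[ℂ] K) : Prop where
  ls_compat : ∀ e y, lam (bmo.ls e y) = tact bmo.ls (θE e) (lam y)
  rs_compat : ∀ y f, lam (bmo.rs y f) = tact bmo.rs (lam y) (θF f)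
  linn_compat : ∀ x y, θE (bmo.linn x y) = tinnL bmo.linn (lam x) (lam y)
  rinn_compat : ∀ x y, θF (bmo.rinn x y) = tinnR bmo.rinn (lam x) (lam y)
  counital : ∀ y, appRight εK (lam y) = y
  coassoc : ∀ y, TensorProduct.map lam LinearMap.id (lam y)
      = (TensorProduct.assoc ℂ Y K K).symm (TensorProduct.map LinearMap.id ΔK (lam y))

/-- Strong Morita equivalence of two coactions of `K` on (raw) C*-algebras `E`, `F`. -/
def CoactSMEOver (ΔK : K →ₗ[ℂ] K ⊗[ℂ] K) (εK : K →ₗ[ℂ] ℂ)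
    (raE : RawCStarAlg E) (raF : RawCStarAlg F)
    (θE : E →ₗ[ℂ] E ⊗[ℂ] K) (θF : F →ₗ[ℂ] F ⊗[ℂ] K) : Prop :=
  ∃ (Y : Type u) (_ : AddCommGroup Y) (_ : Module ℂ Y) (bmo : BimodOver raE raF Y),
    bmo.IsEquivalence ∧
      ∃ lam : Y →ₗ[ℂ] Y ⊗[ℂ] K, IsCoactionBimodOver ΔK εK bmo θE θF lam

end OverCoaction

/-! ### Crossed product bimodules: characterizations -/

section CrossedBimod
variable {H H0 : Type u} [Ring H] [Algebra ℂ H] [StarRing H] [StarModule ℂ H]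
    [FiniteDimensional ℂ H] [Ring H0] [Algebra ℂ H0] [StarRing H0] [StarModule ℂ H0]
    [FiniteDimensional ℂ H0]
variable {A B X : Type u} [Ring A] [Algebra ℂ A] [StarRing A]
    [Ring B] [Algebra ℂ B] [StarRing B] [AddCommGroup X] [Module ℂ X]

/-- The characterization of the crossed product bimodule `X ⋊_λ H` (underlying vector space
`X ⊗ H`) over the crossed products `A ⋊_ρ H` and `B ⋊_σ H`, for a covariant system
`(A, B, X, ρ, σ, λ, H0)`:
`(a ⋊ h)(x ⋊ l) = a[h₍₁₎ ·_λ x] ⋊ h₍₂₎ l`, `(x ⋊ l)(b ⋊ m) = x[l₍₁₎ ·_σ b] ⋊ l₍₂₎ m`,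
`_{A⋊H}⟨x ⋊ h, y ⋊ l⟩ = _A⟨x, [S(h₍₁₎l₍₁₎*)* ·_λ y]⟩ ⋊ h₍₂₎l₍₂₎*`,
`⟨x ⋊ h, y ⋊ l⟩_{B⋊H} = [h₍₁₎* ·_σ ⟨x,y⟩_B] ⋊ h₍₂₎* l`. -/
structure CrossedBimodChar (dp : HopfPairData H H0) (bm : Bimod A B X)
    (ρ : A →ₗ[ℂ] A ⊗[ℂ] H0) (σ : B →ₗ[ℂ] B ⊗[ℂ] H0) (lam : X →ₗ[ℂ] X ⊗[ℂ] H0)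
    (caA : CrossedAlg dp ρ) (caB : CrossedAlg dp σ)
    (bmC : BimodOver caA.toRawCStarAlg caB.toRawCStarAlg (X ⊗[ℂ] H)) : Prop where
  ls_char : ∀ (a : A) (x : X) (h l : H) (n : ℕ) (h1 h2 : Fin n → H),
      dp.dH.comul h = ∑ i, h1 i ⊗ₜ h2 i →
      bmC.ls (a ⊗ₜ h) (x ⊗ₜ l)
        = ∑ i, bm.ls a (coactAct dp lam (h1 i) x) ⊗ₜ (h2 i * l)
  rs_char : ∀ (x : X) (b : B) (l m : H) (n : ℕ) (l1 l2 : Fin n → H),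
      dp.dH.comul l = ∑ i, l1 i ⊗ₜ l2 i →
      bmC.rs (x ⊗ₜ l) (b ⊗ₜ m)
        = ∑ i, bm.rs x (coactAct dp σ (l1 i) b) ⊗ₜ (l2 i * m)
  linn_char : ∀ (x y : X) (h l : H) (n : ℕ) (h1 h2 : Fin n → H)
      (m : ℕ) (l1 l2 : Fin m → H),
      dp.dH.comul h = ∑ i, h1 i ⊗ₜ h2 i →
      dp.dH.comul l = ∑ j, l1 j ⊗ₜ l2 j →
      bmC.linn (x ⊗ₜ h) (y ⊗ₜ l)
        = ∑ i, ∑ j, bm.linn x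
            (coactAct dp lam (star (dp.dH.antipode (h1 i * star (l1 j)))) y)
            ⊗ₜ (h2 i * star (l2 j))
  rinn_char : ∀ (x y : X) (h l : H) (n : ℕ) (h1 h2 : Fin n → H),
      dp.dH.comul h = ∑ i, h1 i ⊗ₜ h2 i →
      bmC.rinn (x ⊗ₜ h) (y ⊗ₜ l)
        = ∑ i, coactAct dp σ (star (h1 i)) (bm.rinn x y) ⊗ₜ (star (h2 i) * l)

/-- The characterization of the twisted crossed product bimodule `X ⋊_λ H` over the twisted
crossed products `A ⋊_{ρ,u} H` and `B ⋊_{σ,v} H`, for a twisted covariant system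
`(A, B, X, ρ, u, σ, v, λ, H0)`:
`(a ⋊ h)(x ⋊ l) = a[h₍₁₎ ·_λ x]v̂(h₍₂₎,l₍₁₎) ⋊ h₍₃₎l₍₂₎`,
`(x ⋊ l)(b ⋊ m) = x[l₍₁₎ ·_{σ,v} b]v̂(l₍₂₎,m₍₁₎) ⋊ l₍₃₎m₍₂₎`,
`_{A⋊H}⟨x ⋊ h, y ⋊ l⟩ = _A⟨x, [S(h₍₂₎l₍₃₎*)* ·_λ y]v̂(S(h₍₁₎l₍₂₎*)*, l₍₁₎)⟩ ⋊ h₍₃₎l₍₄₎*`,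
`⟨x ⋊ h, y ⋊ l⟩_{B⋊H} = v̂*(h₍₂₎*, S(h₍₁₎)*)[h₍₃₎* ·_{σ,v} ⟨x,y⟩_B]v̂(h₍₄₎*, l₍₁₎) ⋊ h₍₅₎*l₍₂₎`. -/
structure TwCrossedBimodChar (dp : HopfPairData H H0) (bm : Bimod A B X)
    (ρ : A →ₗ[ℂ] A ⊗[ℂ] H0) (u : (A ⊗[ℂ] H0) ⊗[ℂ] H0)
    (σ : B →ₗ[ℂ] B ⊗[ℂ] H0) (v : (B ⊗[ℂ] H0) ⊗[ℂ] H0) (lam : X →ₗ[ℂ] X ⊗[ℂ] H0)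
    (caA : TwCrossedAlg dp ρ u) (caB : TwCrossedAlg dp σ v)
    (bmC : BimodOver caA.toRawCStarAlg caB.toRawCStarAlg (X ⊗[ℂ] H)) : Prop where
  ls_char : ∀ (a : A) (x : X) (h l : H) (n : ℕ) (h1 h2 h3 : Fin n → H)
      (m : ℕ) (l1 l2 : Fin m → H),
      comul2 dp.dH h = ∑ i, (h1 i ⊗ₜ h2 i) ⊗ₜ h3 i →
      dp.dH.comul l = ∑ j, l1 j ⊗ₜ l2 j →
      bmC.ls (a ⊗ₜ h) (x ⊗ₜ l)
        = ∑ i, ∑ j, bm.ls a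
            (bm.rs (coactAct dp lam (h1 i) x) (uhat dp v (h2 i) (l1 j)))
            ⊗ₜ (h3 i * l2 j)
  rs_char : ∀ (x : X) (b : B) (l m : H) (n : ℕ) (l1 l2 l3 : Fin n → H)
      (k : ℕ) (m1 m2 : Fin k → H),
      comul2 dp.dH l = ∑ i, (l1 i ⊗ₜ l2 i) ⊗ₜ l3 i →
      dp.dH.comul m = ∑ j, m1 j ⊗ₜ m2 j →
      bmC.rs (x ⊗ₜ l) (b ⊗ₜ m)
        = ∑ i, ∑ j, bm.rs x
            (coactAct dp σ (l1 i) b * uhat dp v (l2 i) (m1 j))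
            ⊗ₜ (l3 i * m2 j)
  linn_char : ∀ (x y : X) (h l : H) (n : ℕ) (h1 h2 h3 : Fin n → H)
      (m : ℕ) (l1 l2 l3 l4 : Fin m → H),
      comul2 dp.dH h = ∑ i, (h1 i ⊗ₜ h2 i) ⊗ₜ h3 i →
      comul3 dp.dH l = ∑ j, ((l1 j ⊗ₜ l2 j) ⊗ₜ l3 j) ⊗ₜ l4 j →
      bmC.linn (x ⊗ₜ h) (y ⊗ₜ l)
        = ∑ i, ∑ j, bm.linn x
            (bm.rs (coactAct dp lam (star (dp.dH.antipode (h2 i * star (l3 j)))) y)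
              (uhat dp v (star (dp.dH.antipode (h1 i * star (l2 j)))) (l1 j)))
            ⊗ₜ (h3 i * star (l4 j))
  rinn_char : ∀ (x y : X) (h l : H) (n : ℕ) (h1 h2 h3 h4 h5 : Fin n → H)
      (m : ℕ) (l1 l2 : Fin m → H),
      comul4 dp.dH h = ∑ i, (((h1 i ⊗ₜ h2 i) ⊗ₜ h3 i) ⊗ₜ h4 i) ⊗ₜ h5 i →
      dp.dH.comul l = ∑ j, l1 j ⊗ₜ l2 j →
      bmC.rinn (x ⊗ₜ h) (y ⊗ₜ l)
        = ∑ i, ∑ j,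
            (uhat dp (tstarWith (tstarWith star) v) (star (h2 i))
                (star (dp.dH.antipode (h1 i)))
              * coactAct dp σ (star (h3 i)) (bm.rinn x y)
              * uhat dp v (star (h4 i)) (l1 j))
            ⊗ₜ (star (h5 i) * l2 j)

end CrossedBimod

/-!
The right structure of `X ⋊_λ H` is computed on elements `w ⋊ 1`, where `Δ(1) = 1 ⊗ 1` makes
every formula collapse to the one in `X`; this gives the right basis `{w_i ⋊ 1}` and both
indices at once.

The left basis `{v_j ⋊ 1}` carries the content. Writing `y = Σ_j _A⟨y, v_j⟩ v_j` and letting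
`h ∈ H` act through the covariance of `λ` gives the expansion
`h · y = Σ_j _A⟨h₍₁₎ · y, S(h₍₂₎)* · v_j⟩ (h₍₃₎ · v_j)`.
Taking `y = ν(k₍₁₎) · x` and `h = k₍₂₎`, where `ν(a) = S(a*)*`, coassociativity and the
antipode identity `k₍₂₎ ν(k₍₁₎) = ε(k) 1` turn this into
`Σ_j _A⟨x, S(k₍₁₎)* · v_j⟩ (k₍₂₎ · v_j) = ε(k) x`,
which is exactly `Σ_j _{A⋊H}⟨x ⋊ h, v_j ⋊ 1⟩ (v_j ⋊ 1) = x ⋊ h` after one more use of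
coassociativity.
-/

section TensorCoordinates
variable {M C : Type*} [AddCommGroup M] [Module ℂ M] [AddCommGroup C] [Module ℂ C]

@[simp] theorem appRight_tmul (f : C →ₗ[ℂ] ℂ) (m : M) (c : C) :
    appRight f (m ⊗ₜ[ℂ] c) = f c • m := by
  simp [appRight]

theorem appRight_rTensor {M' : Type*} [AddCommGroup M'] [Module ℂ M'] (f : C →ₗ[ℂ] ℂ)
    (g : M →ₗ[ℂ] M') (t : M ⊗[ℂ] C) : appRight f (g.rTensor C t) = g (appRight f t) := by
  induction t using TensorProduct.induction_on with
  | zero => simp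
  | tmul m c => simp
  | add s t hs ht => simp only [map_add, hs, ht]

variable [FiniteDimensional ℂ C]

theorem sum_tcoord_tmul (t : M ⊗[ℂ] C) :
    ∑ i, tcoord i t ⊗ₜ[ℂ] Module.finBasis ℂ C i = t := by
  induction t using TensorProduct.induction_on with
  | zero => simp
  | tmul m c =>
      simp_rw [tcoord, appRight_tmul, TensorProduct.smul_tmul, ← TensorProduct.tmul_sum,
        Module.Basis.coord_apply, Module.Basis.sum_repr]
  | add s t hs ht => simp only [map_add, TensorProduct.add_tmul, Finset.sum_add_distrib, hs, ht]

theorem appRight_eq_sum (f : C →ₗ[ℂ] ℂ) (t : M ⊗[ℂ] C) :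
    appRight f t = ∑ i, f (Module.finBasis ℂ C i) • tcoord i t := by
  conv_lhs => rw [← sum_tcoord_tmul t]
  simp [map_sum]

end TensorCoordinates

theorem appRight_tmix {P Q R C : Type*} [AddCommGroup P] [Module ℂ P] [AddCommGroup Q]
    [Module ℂ Q] [AddCommGroup R] [Module ℂ R] [Ring C] [Algebra ℂ C] [FiniteDimensional ℂ C]
    (f : C →ₗ[ℂ] ℂ) (op : P → Q → R) (cop : C → C → C) (s : P ⊗[ℂ] C) (t : Q ⊗[ℂ] C) :
    appRight f (tmix op cop s t) = ∑ i, ∑ j,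
      f (cop (Module.finBasis ℂ C i) (Module.finBasis ℂ C j)) • op (tcoord i s) (tcoord j t) := by
  simp [tmix, map_sum]

namespace HopfAlgData
variable {H : Type u} [Ring H] [Algebra ℂ H] [StarRing H] [StarModule ℂ H]
  [FiniteDimensional ℂ H] (d : HopfAlgData H)

theorem comul_one_eq_sum : d.comul 1 = ∑ _i : Fin 1, (1 : H) ⊗ₜ[ℂ] (1 : H) := by
  simp [Algebra.TensorProduct.one_def]

theorem antipode_one : d.antipode 1 = 1 := by
  simpa using d.antipode_left 1 1 (fun _ => 1) (fun _ => 1) d.comul_one_eq_sum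

theorem assoc_symm_lTensor_comul_comul (h : H) :
    (TensorProduct.assoc ℂ H H H).symm (d.comul.toLinearMap.lTensor H (d.comul h))
      = d.comul.toLinearMap.rTensor H (d.comul h) :=
  (d.coassoc h).symm

theorem assoc_symm_comp_lTensor_comul :
    (TensorProduct.assoc ℂ H H H).symm.toLinearMap ∘ₗ d.comul.toLinearMap.lTensor H
        ∘ₗ d.comul.toLinearMap
      = d.comul.toLinearMap.rTensor H ∘ₗ d.comul.toLinearMap :=
  LinearMap.ext d.assoc_symm_lTensor_comul_comul

theorem rTensor_smulRight_counit_comul {M : Type*} [AddCommGroup M] [Module ℂ M] (x : M)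
    (h : H) : (d.counit.toLinearMap.smulRight x).rTensor H (d.comul h) = x ⊗ₜ h := by
  have hx : (d.counit.toLinearMap.smulRight x).rTensor H
      = (TensorProduct.mk ℂ M H x).comp ((TensorProduct.lid ℂ H).toLinearMap
          ∘ₗ d.counit.toLinearMap.rTensor H) :=
    TensorProduct.ext' fun a b => by simp [TensorProduct.smul_tmul]
  rw [hx]
  exact congrArg (x ⊗ₜ[ℂ] ·) (d.counit_left h)

def conjAntipode : H →ₗ[ℂ] H where
  toFun h := star (d.antipode (star h))
  map_add' h h' := by rw [star_add, map_add, star_add]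
  map_smul' c h := by rw [star_smul, map_smul, star_smul, star_star, RingHom.id_apply]

@[simp] theorem conjAntipode_apply (h : H) : d.conjAntipode h = star (d.antipode (star h)) := rfl

def mulConjAntipode : H ⊗[ℂ] H →ₗ[ℂ] H :=
  LinearMap.mul' ℂ H ∘ₗ (TensorProduct.comm ℂ H H).toLinearMap ∘ₗ d.conjAntipode.rTensor H

@[simp] theorem mulConjAntipode_tmul (a b : H) :
    d.mulConjAntipode (a ⊗ₜ b) = b * d.conjAntipode a := rfl

theorem mulConjAntipode_comul (α : H) : d.mulConjAntipode (d.comul α) = d.counit α • 1 := by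
  -- `comul_star` is the decomposition `Δ(α*) = ∑ₜ kₜ* ⊗ eₜ*` (unfold `tstarWith`); the star of
  -- the antipode axiom for `α*` is then `∑ₜ eₜ ν(kₜ) = ε(α) 1`.
  have hstar := d.antipode_left (star α) _ (fun t => star (tcoord t (d.comul α)))
    (fun t => star (Module.finBasis ℂ H t)) (d.comul_star α)
  have h := congrArg star hstar
  rw [star_sum, d.counit_star, star_smul, star_one, starRingEnd_apply, star_star] at h
  simp only [star_mul, star_star] at h
  conv_lhs => rw [← sum_tcoord_tmul (d.comul α)]
  simpa [map_sum] using h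

theorem mulConjAntipode_comp_comul :
    d.mulConjAntipode ∘ₗ d.comul.toLinearMap = d.counit.toLinearMap.smulRight 1 :=
  LinearMap.ext fun α => d.mulConjAntipode_comul α

theorem rTensor_mulConjAntipode_comul2 (h : H) :
    d.mulConjAntipode.rTensor H (comul2 d h) = (1 : H) ⊗ₜ h := by
  change d.mulConjAntipode.rTensor H (d.comul.toLinearMap.rTensor H (d.comul h)) = _
  rw [← LinearMap.rTensor_comp_apply, mulConjAntipode_comp_comul]
  exact d.rTensor_smulRight_counit_comul 1 h

theorem rTensor_assoc_symm_lTensor_comul2 (k : H) :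
    (TensorProduct.assoc ℂ H H H).symm.toLinearMap.rTensor H
        ((TensorProduct.assoc ℂ H (H ⊗[ℂ] H) H).symm ((comul2 d).lTensor H (d.comul k)))
      = (comul2 d).rTensor H (d.comul k) := by
  set Δ := d.comul.toLinearMap
  have hcomul2 : comul2 d = Δ.rTensor H ∘ₗ Δ := rfl
  have hcoassoc : Δ.lTensor H (d.comul k)
      = TensorProduct.assoc ℂ H H H (Δ.rTensor H (d.comul k)) :=
    (LinearEquiv.symm_apply_eq _).mp (d.assoc_symm_lTensor_comul_comul k)
  have hnat := LinearMap.congr_fun (LinearMap.rTensor_lTensor_comp_assoc_symm H (P := H) (Q := H)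
    Δ) (TensorProduct.assoc ℂ H H H (Δ.rTensor H (d.comul k)))
  simp only [LinearMap.comp_apply, LinearEquiv.coe_coe, LinearEquiv.symm_apply_apply] at hnat
  rw [hcomul2, LinearMap.lTensor_comp_apply, hcoassoc, ← hnat, ← LinearMap.rTensor_comp_apply,
    ← LinearMap.rTensor_comp_apply, LinearMap.comp_assoc, d.assoc_symm_comp_lTensor_comul]

/-- `(h₍₂₎ ν(h₍₁₎) ⊗ h₍₃₎) ⊗ h₍₄₎ = (1 ⊗ h₍₁₎) ⊗ h₍₂₎`, written with `Δ h = ∑ₛ hₛ ⊗ eₛ`. -/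
theorem sum_rTensor_mulRight_comul2 (k : H) :
    ∑ s, ((LinearMap.mulRight ℂ (d.conjAntipode (tcoord s (d.comul k)))).rTensor H).rTensor H
        (comul2 d (Module.finBasis ℂ H s))
      = (TensorProduct.mk ℂ H H 1).rTensor H (d.comul k) := by
  have hmul : ∀ a w, (d.mulConjAntipode.rTensor H).rTensor H
      ((TensorProduct.assoc ℂ H H H).symm.toLinearMap.rTensor H
        ((TensorProduct.assoc ℂ H (H ⊗[ℂ] H) H).symm (a ⊗ₜ w)))
      = ((LinearMap.mulRight ℂ (d.conjAntipode a)).rTensor H).rTensor H w := by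
    intro a w
    induction w using TensorProduct.induction_on with
    | zero => simp
    | tmul u r =>
        induction u using TensorProduct.induction_on with
        | zero => simp
        | tmul p q => simp
        | add u₁ u₂ h₁ h₂ => simp_all [TensorProduct.add_tmul, TensorProduct.tmul_add]
    | add w₁ w₂ h₁ h₂ => simp_all [TensorProduct.tmul_add]
  calc ∑ s, ((LinearMap.mulRight ℂ (d.conjAntipode (tcoord s (d.comul k)))).rTensor H).rTensor H
          (comul2 d (Module.finBasis ℂ H s))
      = (d.mulConjAntipode.rTensor H).rTensor H
          ((TensorProduct.assoc ℂ H H H).symm.toLinearMap.rTensor H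
            ((TensorProduct.assoc ℂ H (H ⊗[ℂ] H) H).symm ((comul2 d).lTensor H (d.comul k)))) := by
        conv_rhs => rw [← sum_tcoord_tmul (d.comul k)]
        simp only [map_sum, LinearMap.lTensor_tmul, hmul]
    _ = (d.mulConjAntipode.rTensor H).rTensor H ((comul2 d).rTensor H (d.comul k)) := by
        rw [d.rTensor_assoc_symm_lTensor_comul2]
    _ = (TensorProduct.mk ℂ H H 1).rTensor H (d.comul k) := by
        rw [← LinearMap.rTensor_comp_apply]
        congr 2
        exact LinearMap.ext d.rTensor_mulConjAntipode_comul2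

end HopfAlgData

namespace HopfPairData
variable {H H0 : Type u} [Ring H] [Algebra ℂ H] [StarRing H] [StarModule ℂ H]
  [FiniteDimensional ℂ H] [Ring H0] [Algebra ℂ H0] [StarRing H0] [StarModule ℂ H0]
  [FiniteDimensional ℂ H0] (dp : HopfPairData H H0)

theorem pair_mul_left_eq_sum (h l : H) (φ : H0) :
    dp.pair (h * l) φ = ∑ u, dp.pair h (tcoord u (dp.dH0.comul φ))
      * dp.pair l (Module.finBasis ℂ H0 u) :=
  dp.pair_mul_left h l φ _ _ _ (sum_tcoord_tmul _).symm

theorem pair_mul_right_eq_sum (k : H) (φ ψ : H0) :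
    dp.pair k (φ * ψ) = ∑ u, dp.pair (tcoord u (dp.dH.comul k)) φ
      * dp.pair (Module.finBasis ℂ H u) ψ :=
  dp.pair_mul_right k φ ψ _ _ _ (sum_tcoord_tmul _).symm

variable {P Q R : Type*} [AddCommGroup P] [Module ℂ P] [AddCommGroup Q] [Module ℂ Q]
  [AddCommGroup R] [Module ℂ R]

theorem appRight_pair_tact (β : P →ₗ[ℂ] Q →ₗ[ℂ] R) (k : H) (s : P ⊗[ℂ] H0)
    (t : Q ⊗[ℂ] H0) :
    appRight (dp.pair k) (tact (fun p q => β p q) s t)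
      = ∑ u, β (appRight (dp.pair (tcoord u (dp.dH.comul k))) s)
          (appRight (dp.pair (Module.finBasis ℂ H u)) t) := by
  rw [tact, appRight_tmix]
  simp only [appRight_eq_sum (dp.pair _), pair_mul_right_eq_sum, map_sum, map_smul,
    LinearMap.sum_apply, LinearMap.smul_apply, Finset.sum_smul, Finset.smul_sum, smul_smul]
  refine (Finset.sum_congr rfl fun i _ => Finset.sum_comm).trans (Finset.sum_comm.trans ?_)
  exact Finset.sum_congr rfl fun u _ => Finset.sum_comm.trans <|
    Finset.sum_congr rfl fun j _ => Finset.sum_congr rfl fun i _ => by rw [mul_comm]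

theorem appRight_pair_tinnL (β : P →ₗ[ℂ] P →ₗ⋆[ℂ] R) (k : H) (s t : P ⊗[ℂ] H0) :
    appRight (dp.pair k) (tinnL (fun p q => β p q) s t)
      = ∑ u, β (appRight (dp.pair (tcoord u (dp.dH.comul k))) s)
          (appRight (dp.pair (star (dp.dH.antipode (Module.finBasis ℂ H u)))) t) := by
  rw [tinnL, appRight_tmix]
  simp only [appRight_eq_sum (dp.pair _), pair_mul_right_eq_sum, dp.pair_star', map_sum,
    map_smul, map_smulₛₗ, LinearMap.sum_apply, LinearMap.smul_apply, Finset.sum_smul,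
    Finset.smul_sum, smul_smul]
  refine (Finset.sum_congr rfl fun i _ => Finset.sum_comm).trans (Finset.sum_comm.trans ?_)
  exact Finset.sum_congr rfl fun u _ => Finset.sum_comm.trans <|
    Finset.sum_congr rfl fun j _ => Finset.sum_congr rfl fun i _ => by rw [mul_comm]

end HopfPairData

section CoactAct
variable {H H0 : Type u} [Ring H] [Algebra ℂ H] [StarRing H] [StarModule ℂ H]
  [FiniteDimensional ℂ H] [Ring H0] [Algebra ℂ H0] [StarRing H0] [StarModule ℂ H0]
  [FiniteDimensional ℂ H0] (dp : HopfPairData H H0) {M : Type u} [AddCommGroup M] [Module ℂ M]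
  (θ : M →ₗ[ℂ] M ⊗[ℂ] H0)

def coactActₗ : H →ₗ[ℂ] M →ₗ[ℂ] M :=
  LinearMap.mk₂ ℂ (coactAct dp θ)
    (fun h h' m => by simp [coactAct, appRight, TensorProduct.map_add_right])
    (fun c h m => by simp [coactAct, appRight, TensorProduct.map_smul_right])
    (fun h m m' => by simp [coactAct])
    (fun c h m => by simp [coactAct])

@[simp] theorem coactActₗ_apply (h : H) (m : M) : coactActₗ dp θ h m = coactAct dp θ h m := rfl

theorem coactAct_one (hθ : ∀ m, appRight dp.dH0.counit.toLinearMap (θ m) = m) (m : M) :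
    coactAct dp θ 1 m = m := by
  rw [coactAct, show dp.pair 1 = dp.dH0.counit.toLinearMap from LinearMap.ext dp.pair_one_left]
  exact hθ m

theorem coactAct_coactAct
    (hθ : ∀ m, TensorProduct.map θ LinearMap.id (θ m) = (TensorProduct.assoc ℂ M H0 H0).symm
      (TensorProduct.map LinearMap.id dp.dH0.comul.toLinearMap (θ m)))
    (p q : H) (m : M) : coactAct dp θ p (coactAct dp θ q m) = coactAct dp θ (p * q) m := by
  have slant_comul : ∀ w : M ⊗[ℂ] H0, appRight (dp.pair p) (appRight (dp.pair q)
      ((TensorProduct.assoc ℂ M H0 H0).symm (dp.dH0.comul.toLinearMap.lTensor M w)))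
        = appRight (dp.pair (p * q)) w := by
    intro w
    induction w using TensorProduct.induction_on with
    | zero => simp
    | tmul m' φ =>
        rw [LinearMap.lTensor_tmul, AlgHom.toLinearMap_apply,
          ← sum_tcoord_tmul (dp.dH0.comul φ), appRight_tmul, dp.pair_mul_left_eq_sum]
        simp [TensorProduct.tmul_sum, Finset.sum_smul, smul_smul, mul_comm]
    | add w w' hw hw' => simp only [map_add, hw, hw']
  rw [coactAct, coactAct, coactAct, ← slant_comul, ← appRight_rTensor]
  exact congrArg _ (congrArg _ (hθ m))

end CoactAct

namespace Bimod
variable {A B X : Type u} [Ring A] [Algebra ℂ A] [StarRing A] [Ring B] [Algebra ℂ B]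
  [StarRing B] [AddCommGroup X] [Module ℂ X] (bm : Bimod A B X)

def lsₗ : A →ₗ[ℂ] X →ₗ[ℂ] X :=
  LinearMap.mk₂ ℂ bm.ls bm.ls_add bm.ls_smul bm.ls_add' bm.ls_smul'

def linnₛₗ : X →ₗ[ℂ] X →ₗ⋆[ℂ] A :=
  LinearMap.mk₂'ₛₗ (RingHom.id ℂ) (starRingEnd ℂ) bm.linn bm.linn_add_left
    bm.linn_smul_left bm.linn_add_right bm.linn_smul_right

@[simp] theorem lsₗ_apply (a : A) (x : X) : bm.lsₗ a x = bm.ls a x := rfl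

@[simp] theorem linnₛₗ_apply (x y : X) : bm.linnₛₗ x y = bm.linn x y := rfl

end Bimod

section CovariantSystem
variable {H H0 : Type u} [Ring H] [Algebra ℂ H] [StarRing H] [StarModule ℂ H]
  [FiniteDimensional ℂ H] [Ring H0] [Algebra ℂ H0] [StarRing H0] [StarModule ℂ H0]
  [FiniteDimensional ℂ H0] (dp : HopfPairData H H0)
  {A B X : Type u} [Ring A] [Algebra ℂ A] [StarRing A] [Ring B] [Algebra ℂ B]
  [StarRing B] [AddCommGroup X] [Module ℂ X] (bm : Bimod A B X)
  {ρ : A →ₗ[ℂ] A ⊗[ℂ] H0} (lam : X →ₗ[ℂ] X ⊗[ℂ] H0)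

def coactLinn (x w : X) : H →ₗ[ℂ] H →ₗ[ℂ] A :=
  LinearMap.mk₂ ℂ
    (fun p q => bm.linn (coactAct dp lam p x) (coactAct dp lam (star (dp.dH.antipode q)) w))
    (fun p p' q => by simp [← coactActₗ_apply, bm.linn_add_left])
    (fun c p q => by simp [← coactActₗ_apply, bm.linn_smul_left])
    (fun p q q' => by simp [← coactActₗ_apply, bm.linn_add_right])
    (fun c p q => by simp [← coactActₗ_apply, bm.linn_smul_right])

def coactLs (w : X) : A ⊗[ℂ] H →ₗ[ℂ] X :=
  TensorProduct.lift (bm.lsₗ.compl₂ ((coactActₗ dp lam).flip w))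

def coactLsLinn (x w : X) : (H ⊗[ℂ] H) ⊗[ℂ] H →ₗ[ℂ] X :=
  coactLs dp bm lam w ∘ₗ (TensorProduct.lift (coactLinn dp bm lam x w)).rTensor H

@[simp] theorem coactLsLinn_tmul (x w : X) (p q r : H) :
    coactLsLinn dp bm lam x w ((p ⊗ₜ q) ⊗ₜ r)
      = bm.ls (bm.linn (coactAct dp lam p x) (coactAct dp lam (star (dp.dH.antipode q)) w))
          (coactAct dp lam r w) := rfl

theorem lift_coactLinn_comul (hlinn : ∀ x y, ρ (bm.linn x y) = tinnL bm.linn (lam x) (lam y))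
    (x w : X) (k : H) :
    TensorProduct.lift (coactLinn dp bm lam x w) (dp.dH.comul k)
      = coactAct dp ρ k (bm.linn x w) := by
  rw [coactAct, hlinn]
  refine Eq.trans ?_ (dp.appRight_pair_tinnL bm.linnₛₗ k (lam x) (lam w)).symm
  conv_lhs => rw [← sum_tcoord_tmul (dp.dH.comul k)]
  simp [map_sum, coactLinn, coactAct]

theorem coactLs_rTensor_comul (hls : ∀ a x, lam (bm.ls a x) = tact bm.ls (ρ a) (lam x))
    (a : A) (w : X) (k : H) :
    coactLs dp bm lam w (((coactActₗ dp ρ).flip a).rTensor H (dp.dH.comul k))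
      = coactAct dp lam k (bm.ls a w) := by
  rw [coactAct, hls]
  refine Eq.trans ?_ (dp.appRight_pair_tact bm.lsₗ k (ρ a) (lam w)).symm
  conv_lhs => rw [← sum_tcoord_tmul (dp.dH.comul k)]
  simp [map_sum, coactLs, coactAct]

theorem coactLsLinn_comul2 (hls : ∀ a x, lam (bm.ls a x) = tact bm.ls (ρ a) (lam x))
    (hlinn : ∀ x y, ρ (bm.linn x y) = tinnL bm.linn (lam x) (lam y)) (y w : X) (m : H) :
    coactLsLinn dp bm lam y w (comul2 dp.dH m) = coactAct dp lam m (bm.ls (bm.linn y w) w) := by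
  rw [← coactLs_rTensor_comul dp bm lam hls]
  change coactLs dp bm lam w ((TensorProduct.lift (coactLinn dp bm lam y w)).rTensor H
    (dp.dH.comul.toLinearMap.rTensor H (dp.dH.comul m))) = _
  have hL : TensorProduct.lift (coactLinn dp bm lam y w) ∘ₗ dp.dH.comul.toLinearMap
      = (coactActₗ dp ρ).flip (bm.linn y w) :=
    LinearMap.ext fun k => lift_coactLinn_comul dp bm lam hlinn y w k
  rw [← LinearMap.rTensor_comp_apply, hL]

theorem coactAct_eq_sum_coactLsLinn (hls : ∀ a x, lam (bm.ls a x) = tact bm.ls (ρ a) (lam x))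
    (hlinn : ∀ x y, ρ (bm.linn x y) = tinnL bm.linn (lam x) (lam y))
    {n : ℕ} (v : Fin n → X) (hv : ∀ x, ∑ j, bm.ls (bm.linn x (v j)) (v j) = x) (m : H) (y : X) :
    coactAct dp lam m y = ∑ j, coactLsLinn dp bm lam y (v j) (comul2 dp.dH m) := by
  conv_lhs => rw [← hv y, ← coactActₗ_apply, map_sum]
  simp [coactLsLinn_comul2 dp bm lam hls hlinn]

theorem coactLsLinn_rTensor_rTensor_mulRight
    (hcoassoc : ∀ x, TensorProduct.map lam LinearMap.id (lam x)
      = (TensorProduct.assoc ℂ X H0 H0).symm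
          (TensorProduct.map LinearMap.id dp.dH0.comul.toLinearMap (lam x)))
    (x w : X) (c : H) (t : (H ⊗[ℂ] H) ⊗[ℂ] H) :
    coactLsLinn dp bm lam x w (((LinearMap.mulRight ℂ c).rTensor H).rTensor H t)
      = coactLsLinn dp bm lam (coactAct dp lam c x) w t := by
  have h : coactLsLinn dp bm lam x w ∘ₗ ((LinearMap.mulRight ℂ c).rTensor H).rTensor H
      = coactLsLinn dp bm lam (coactAct dp lam c x) w :=
    TensorProduct.ext_threefold fun p q r => by simp [coactAct_coactAct dp lam hcoassoc]
  exact LinearMap.congr_fun h t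

theorem sum_coactLsLinn_comul (hls : ∀ a x, lam (bm.ls a x) = tact bm.ls (ρ a) (lam x))
    (hlinn : ∀ x y, ρ (bm.linn x y) = tinnL bm.linn (lam x) (lam y))
    (hcounital : ∀ x, appRight dp.dH0.counit.toLinearMap (lam x) = x)
    (hcoassoc : ∀ x, TensorProduct.map lam LinearMap.id (lam x)
      = (TensorProduct.assoc ℂ X H0 H0).symm
          (TensorProduct.map LinearMap.id dp.dH0.comul.toLinearMap (lam x)))
    {n : ℕ} (v : Fin n → X) (hv : ∀ x, ∑ j, bm.ls (bm.linn x (v j)) (v j) = x) (x : X) (k : H) :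
    ∑ j, coactLsLinn dp bm lam x (v j) ((TensorProduct.mk ℂ H H 1).rTensor H (dp.dH.comul k))
      = dp.dH.counit k • x := by
  have hν : ∑ s, Module.finBasis ℂ H s * dp.dH.conjAntipode (tcoord s (dp.dH.comul k))
      = dp.dH.counit k • 1 := by
    rw [← dp.dH.mulConjAntipode_comul k]
    conv_rhs => rw [← sum_tcoord_tmul (dp.dH.comul k)]
    simp [map_sum]
  rw [← dp.dH.sum_rTensor_mulRight_comul2 k]
  simp only [map_sum, coactLsLinn_rTensor_rTensor_mulRight dp bm lam hcoassoc]
  rw [Finset.sum_comm]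
  simp only [← coactAct_eq_sum_coactLsLinn dp bm lam hls hlinn v hv,
    coactAct_coactAct dp lam hcoassoc]
  calc ∑ s, coactAct dp lam
          (Module.finBasis ℂ H s * dp.dH.conjAntipode (tcoord s (dp.dH.comul k))) x
      = coactAct dp lam (dp.dH.counit k • 1) x := by
        simp [← hν, ← coactActₗ_apply, map_sum]
    _ = dp.dH.counit k • x := by
        rw [← coactActₗ_apply, map_smul, LinearMap.smul_apply, coactActₗ_apply,
          coactAct_one dp lam hcounital]

end CovariantSystem

namespace BimodOver
variable {E F Y : Type u} [AddCommGroup E] [Module ℂ E] [AddCommGroup F] [Module ℂ F]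
  [AddCommGroup Y] [Module ℂ Y] {raE : RawCStarAlg E} {raF : RawCStarAlg F}
  (bmo : BimodOver raE raF Y)

def lsₗ : E →ₗ[ℂ] Y →ₗ[ℂ] Y :=
  LinearMap.mk₂ ℂ bmo.ls bmo.ls_add bmo.ls_smul bmo.ls_add' bmo.ls_smul'

def rsₗ : Y →ₗ[ℂ] F →ₗ[ℂ] Y :=
  LinearMap.mk₂ ℂ bmo.rs bmo.rs_add' bmo.rs_smul' bmo.rs_add bmo.rs_smul

def linnₛₗ : Y →ₗ[ℂ] Y →ₗ⋆[ℂ] E :=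
  LinearMap.mk₂'ₛₗ (RingHom.id ℂ) (starRingEnd ℂ) bmo.linn bmo.linn_add_left
    bmo.linn_smul_left bmo.linn_add_right bmo.linn_smul_right

def rinnₛₗ : Y →ₗ⋆[ℂ] Y →ₗ[ℂ] F :=
  LinearMap.mk₂'ₛₗ (starRingEnd ℂ) (RingHom.id ℂ) bmo.rinn bmo.rinn_add_left
    bmo.rinn_smul_left bmo.rinn_add_right bmo.rinn_smul_right

@[simp] theorem lsₗ_apply (e : E) (y : Y) : bmo.lsₗ e y = bmo.ls e y := rfl

@[simp] theorem rsₗ_apply (y : Y) (f : F) : bmo.rsₗ y f = bmo.rs y f := rfl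

@[simp] theorem linnₛₗ_apply (x y : Y) : bmo.linnₛₗ x y = bmo.linn x y := rfl

@[simp] theorem rinnₛₗ_apply (x y : Y) : bmo.rinnₛₗ x y = bmo.rinn x y := rfl

end BimodOver

namespace CrossedBimodChar
variable {H H0 : Type u} [Ring H] [Algebra ℂ H] [StarRing H] [StarModule ℂ H]
  [FiniteDimensional ℂ H] [Ring H0] [Algebra ℂ H0] [StarRing H0] [StarModule ℂ H0]
  [FiniteDimensional ℂ H0] {dp : HopfPairData H H0}
  {A B X : Type u} [Ring A] [Algebra ℂ A] [StarRing A] [Ring B] [Algebra ℂ B]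
  [StarRing B] [AddCommGroup X] [Module ℂ X] {bm : Bimod A B X}
  {ρ : A →ₗ[ℂ] A ⊗[ℂ] H0} {σ : B →ₗ[ℂ] B ⊗[ℂ] H0} {lam : X →ₗ[ℂ] X ⊗[ℂ] H0}
  {caA : CrossedAlg dp ρ} {caB : CrossedAlg dp σ}
  {bmC : BimodOver caA.toRawCStarAlg caB.toRawCStarAlg (X ⊗[ℂ] H)}

theorem rinn_tmul_one (hchar : CrossedBimodChar dp bm ρ σ lam caA caB bmC)
    (hσ : ∀ b, appRight dp.dH0.counit.toLinearMap (σ b) = b)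
    (w x : X) (h : H) : bmC.rinn (w ⊗ₜ 1) (x ⊗ₜ h) = bm.rinn w x ⊗ₜ h := by
  rw [hchar.rinn_char w x 1 h 1 _ _ dp.dH.comul_one_eq_sum, Fin.sum_univ_one, star_one, one_mul,
    coactAct_one dp σ hσ]

theorem rs_tmul_one (hchar : CrossedBimodChar dp bm ρ σ lam caA caB bmC)
    (hσ : ∀ b, appRight dp.dH0.counit.toLinearMap (σ b) = b)
    (w : X) (b : B) (h : H) : bmC.rs (w ⊗ₜ 1) (b ⊗ₜ h) = bm.rs w b ⊗ₜ h := by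
  rw [hchar.rs_char w b 1 h 1 _ _ dp.dH.comul_one_eq_sum, Fin.sum_univ_one, one_mul,
    coactAct_one dp σ hσ]

theorem linn_tmul_one (hchar : CrossedBimodChar dp bm ρ σ lam caA caB bmC)
    (hcounital : ∀ x, appRight dp.dH0.counit.toLinearMap (lam x) = x)
    (w w' : X) : bmC.linn (w ⊗ₜ 1) (w' ⊗ₜ 1) = bm.linn w w' ⊗ₜ 1 := by
  rw [hchar.linn_char w w' 1 1 1 _ _ 1 _ _ dp.dH.comul_one_eq_sum dp.dH.comul_one_eq_sum]
  simp [dp.dH.antipode_one, coactAct_one dp lam hcounital]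

theorem sum_rs_rinn_tmul_one (hchar : CrossedBimodChar dp bm ρ σ lam caA caB bmC)
    (hσ : ∀ b, appRight dp.dH0.counit.toLinearMap (σ b) = b)
    {n : ℕ} (w : Fin n → X) (hw : ∀ x, ∑ i, bm.rs (w i) (bm.rinn (w i) x) = x)
    (ξ : X ⊗[ℂ] H) : ∑ i, bmC.rs (w i ⊗ₜ 1) (bmC.rinn (w i ⊗ₜ 1) ξ) = ξ := by
  have h : ∑ i, bmC.rsₗ (w i ⊗ₜ 1) ∘ₗ bmC.rinnₛₗ (w i ⊗ₜ 1) = LinearMap.id :=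
    TensorProduct.ext' fun x h => by
      simp [hchar.rinn_tmul_one hσ, hchar.rs_tmul_one hσ, ← TensorProduct.sum_tmul, hw]
  simpa using LinearMap.congr_fun h ξ

theorem ls_linn_tmul_one (hchar : CrossedBimodChar dp bm ρ σ lam caA caB bmC)
    (hcounital : ∀ x, appRight dp.dH0.counit.toLinearMap (lam x) = x) (x v : X) (h : H) :
    bmC.ls (bmC.linn (x ⊗ₜ h) (v ⊗ₜ 1)) (v ⊗ₜ 1)
      = (coactLsLinn dp bm lam x v ∘ₗ (TensorProduct.mk ℂ H H 1).rTensor H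
          ∘ₗ dp.dH.comul.toLinearMap).rTensor H (dp.dH.comul h) := by
  rw [LinearMap.rTensor_comp_apply, LinearMap.rTensor_comp_apply,
    ← dp.dH.assoc_symm_lTensor_comul_comul,
    hchar.linn_char x v h 1 _ _ _ 1 _ _ (sum_tcoord_tmul _).symm dp.dH.comul_one_eq_sum]
  simp only [Fin.sum_univ_one, star_one, mul_one]
  rw [← bmC.lsₗ_apply, map_sum, LinearMap.sum_apply]
  conv_rhs => rw [← sum_tcoord_tmul (dp.dH.comul h)]
  simp only [map_sum, LinearMap.lTensor_tmul]
  refine Finset.sum_congr rfl fun s _ => ?_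
  rw [bmC.lsₗ_apply, hchar.ls_char _ v _ 1 _ _ _ (sum_tcoord_tmul _).symm]
  conv_rhs => rw [AlgHom.toLinearMap_apply,
    ← sum_tcoord_tmul (dp.dH.comul (Module.finBasis ℂ H s))]
  simp [TensorProduct.tmul_sum, map_sum, coactAct_one dp lam hcounital]

theorem sum_ls_linn_tmul_one (hchar : CrossedBimodChar dp bm ρ σ lam caA caB bmC)
    (hls : ∀ a x, lam (bm.ls a x) = tact bm.ls (ρ a) (lam x))
    (hlinn : ∀ x y, ρ (bm.linn x y) = tinnL bm.linn (lam x) (lam y))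
    (hcounital : ∀ x, appRight dp.dH0.counit.toLinearMap (lam x) = x)
    (hcoassoc : ∀ x, TensorProduct.map lam LinearMap.id (lam x)
      = (TensorProduct.assoc ℂ X H0 H0).symm
          (TensorProduct.map LinearMap.id dp.dH0.comul.toLinearMap (lam x)))
    {n : ℕ} (v : Fin n → X) (hv : ∀ x, ∑ j, bm.ls (bm.linn x (v j)) (v j) = x)
    (ξ : X ⊗[ℂ] H) : ∑ j, bmC.ls (bmC.linn ξ (v j ⊗ₜ 1)) (v j ⊗ₜ 1) = ξ := by
  have hcounit : ∀ x, ∑ j, coactLsLinn dp bm lam x (v j)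
      ∘ₗ (TensorProduct.mk ℂ H H 1).rTensor H ∘ₗ dp.dH.comul.toLinearMap
        = dp.dH.counit.toLinearMap.smulRight x := fun x =>
    LinearMap.ext fun k => by
      simpa using sum_coactLsLinn_comul dp bm lam hls hlinn hcounital hcoassoc v hv x k
  have h : ∑ j, bmC.lsₗ.flip (v j ⊗ₜ 1) ∘ₗ bmC.linnₛₗ.flip (v j ⊗ₜ 1) = LinearMap.id :=
    TensorProduct.ext' fun x h => by
      have hsum := (map_sum (LinearMap.rTensorHom H) (fun j => coactLsLinn dp bm lam x (v j)
        ∘ₗ (TensorProduct.mk ℂ H H 1).rTensor H ∘ₗ dp.dH.comul.toLinearMap) Finset.univ).symm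
      simp only [LinearMap.coe_rTensorHom] at hsum
      simp only [LinearMap.sum_apply, LinearMap.comp_apply, LinearMap.flip_apply,
        BimodOver.lsₗ_apply, BimodOver.linnₛₗ_apply, LinearMap.id_apply,
        hchar.ls_linn_tmul_one hcounital]
      rw [← LinearMap.sum_apply, hsum, hcounit, dp.dH.rTensor_smulRight_counit_comul]
  simpa using LinearMap.congr_fun h ξ

end CrossedBimodChar

theorem crossed_product_bimodule_finite_type_general
    {H H0 : Type u} [CStarAlgebra H] [FiniteDimensional ℂ H]
    [CStarAlgebra H0] [FiniteDimensional ℂ H0]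
    {A B X : Type u} [CStarAlgebra A] [CStarAlgebra B]
    [AddCommGroup X] [Module ℂ X]
    (dp : HopfPairData H H0)
    (ρ : A →ₗ[ℂ] A ⊗[ℂ] H0) (σ : B →ₗ[ℂ] B ⊗[ℂ] H0)
    (hσ : IsCoaction dp.dH0.comul.toLinearMap dp.dH0.counit.toLinearMap σ)
    (bm : Bimod A B X) (hft : bm.FiniteType)
    (lam : X →ₗ[ℂ] X ⊗[ℂ] H0)
    (hcov : IsCoactionBimod dp.dH0.comul.toLinearMap dp.dH0.counit.toLinearMap bm ρ σ lam)
    (caA : CrossedAlg dp ρ) (caB : CrossedAlg dp σ)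
    (bmC : BimodOver caA.toRawCStarAlg caB.toRawCStarAlg (X ⊗[ℂ] H))
    (hchar : CrossedBimodChar dp bm ρ σ lam caA caB bmC) :
    bmC.FiniteType ∧
    (∀ (nl : ℕ) (v : Fin nl → X), (∀ x, ∑ j, bm.ls (bm.linn x (v j)) (v j) = x) →
      ((∀ ξ : X ⊗[ℂ] H,
          ∑ j, bmC.ls (bmC.linn ξ ((v j) ⊗ₜ (1 : H))) ((v j) ⊗ₜ (1 : H)) = ξ) ∧
        ∑ j, bmC.rinn ((v j) ⊗ₜ (1 : H)) ((v j) ⊗ₜ (1 : H))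
          = (∑ j, bm.rinn (v j) (v j)) ⊗ₜ (1 : H))) ∧
    (∀ (nr : ℕ) (w : Fin nr → X), (∀ x, ∑ i, bm.rs (w i) (bm.rinn (w i) x) = x) →
      ((∀ ξ : X ⊗[ℂ] H,
          ∑ i, bmC.rs ((w i) ⊗ₜ (1 : H)) (bmC.rinn ((w i) ⊗ₜ (1 : H)) ξ) = ξ) ∧
        ∑ i, bmC.linn ((w i) ⊗ₜ (1 : H)) ((w i) ⊗ₜ (1 : H))
          = (∑ i, bm.linn (w i) (w i)) ⊗ₜ (1 : H))) := by
  have right_basis {n : ℕ} (w : Fin n → X) (hw : ∀ x, ∑ i, bm.rs (w i) (bm.rinn (w i) x) = x) :=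
    hchar.sum_rs_rinn_tmul_one hσ.counital w hw
  have left_basis {n : ℕ} (v : Fin n → X) (hv : ∀ x, ∑ j, bm.ls (bm.linn x (v j)) (v j) = x) :=
    hchar.sum_ls_linn_tmul_one hcov.ls_compat hcov.linn_compat hcov.counital hcov.coassoc v hv
  obtain ⟨⟨nr, w, hw⟩, ⟨nl, v, hv⟩⟩ := hft
  refine ⟨⟨⟨nr, _, right_basis w hw⟩, ⟨nl, _, left_basis v hv⟩⟩,
    fun _ v hv => ⟨left_basis v hv, ?_⟩, fun _ w hw => ⟨right_basis w hw, ?_⟩⟩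
  · simp only [hchar.rinn_tmul_one hσ.counital, TensorProduct.sum_tmul]
  · simp only [hchar.linn_tmul_one hcov.counital, TensorProduct.sum_tmul]

/-- Let `(A, B, X, ρ, σ, λ, H0)` be a covariant system with `X` a Hilbert
`A`–`B` bimodule of finite type.  Then the crossed product `X ⋊_λ H` is a Hilbert
`(A ⋊_ρ H)`–`(B ⋊_σ H)` bimodule of finite type, and its indices satisfy
`l-Ind[X ⋊_λ H] = l-Ind[X] ⋊_σ 1` and `r-Ind[X ⋊_λ H] = r-Ind[X] ⋊_ρ 1`; indeed for any
finite left (resp. right) basis `{v_j}` (resp. `{w_i}`) of `X`, the family `{v_j ⋊ 1}`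
(resp. `{w_i ⋊ 1}`) is a finite left (resp. right) basis of `X ⋊_λ H` computing the
indices. -/
theorem crossed_product_bimodule_finite_type
    {H H0 : Type u} [CStarAlgebra H] [StarModule ℂ H] [FiniteDimensional ℂ H]
    [CStarAlgebra H0] [StarModule ℂ H0] [FiniteDimensional ℂ H0]
    {A B X : Type u} [CStarAlgebra A] [StarModule ℂ A] [CStarAlgebra B] [StarModule ℂ B]
    [AddCommGroup X] [Module ℂ X]
    (dp : HopfPairData H H0)
    (ρ : A →ₗ[ℂ] A ⊗[ℂ] H0) (σ : B →ₗ[ℂ] B ⊗[ℂ] H0)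
    (hρ : IsCoaction dp.dH0.comul.toLinearMap dp.dH0.counit.toLinearMap ρ)
    (hσ : IsCoaction dp.dH0.comul.toLinearMap dp.dH0.counit.toLinearMap σ)
    (bm : Bimod A B X) (hft : bm.FiniteType)
    (lam : X →ₗ[ℂ] X ⊗[ℂ] H0)
    (hcov : IsCoactionBimod dp.dH0.comul.toLinearMap dp.dH0.counit.toLinearMap bm ρ σ lam)
    (caA : CrossedAlg dp ρ) (caB : CrossedAlg dp σ)
    (bmC : BimodOver caA.toRawCStarAlg caB.toRawCStarAlg (X ⊗[ℂ] H))
    (hchar : CrossedBimodChar dp bm ρ σ lam caA caB bmC) :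
    bmC.FiniteType ∧
    (∀ (nl : ℕ) (v : Fin nl → X), (∀ x, ∑ j, bm.ls (bm.linn x (v j)) (v j) = x) →
      ((∀ ξ : X ⊗[ℂ] H,
          ∑ j, bmC.ls (bmC.linn ξ ((v j) ⊗ₜ (1 : H))) ((v j) ⊗ₜ (1 : H)) = ξ) ∧
        ∑ j, bmC.rinn ((v j) ⊗ₜ (1 : H)) ((v j) ⊗ₜ (1 : H))
          = (∑ j, bm.rinn (v j) (v j)) ⊗ₜ (1 : H))) ∧
    (∀ (nr : ℕ) (w : Fin nr → X), (∀ x, ∑ i, bm.rs (w i) (bm.rinn (w i) x) = x) →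
      ((∀ ξ : X ⊗[ℂ] H,
          ∑ i, bmC.rs ((w i) ⊗ₜ (1 : H)) (bmC.rinn ((w i) ⊗ₜ (1 : H)) ξ) = ξ) ∧
        ∑ i, bmC.linn ((w i) ⊗ₜ (1 : H)) ((w i) ⊗ₜ (1 : H))
          = (∑ i, bm.linn (w i) (w i)) ⊗ₜ (1 : H))) :=
  crossed_product_bimodule_finite_type_general dp ρ σ hσ bm hft lam hcov caA caB bmC hchar

end SMEPaper
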